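/- Let G = (G₁, …, G_k) and H = (H₁, …, H_k) be independent random vectors on a probability space with all coordinates square-integrable. Then ∫ Var(∑ᵢ gᵢ·Hᵢ) dμ_G(g) ≥ Var(∑ᵢ E[Gᵢ]·Hᵢ), where μ_G denotes the law of G; that is, the average over G of the variance (over H) of the inner product ⟨g, H⟩ is at least the variance of ⟨E[G], H⟩. -/

import Mathlib

/-!
`g ↦ Var(⟨g, H⟩)` is the quadratic form of the covariance matrix `C` of `H`, which is positive
semidefinite. For such a form `Q`, `E[Q(G)] - Q(E[G]) = E[Q(G - E[G])] ≥ 0`, a finite-dimensional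
instance of Jensen's inequality; after transporting the outer integral from the law of `G` back to
`Ω`, this is the claim.
-/

open MeasureTheory ProbabilityTheory Finset

namespace ProbabilityTheory

variable {Ω ι : Type*} {mΩ : MeasurableSpace Ω} {μ : Measure Ω} [Fintype ι]

lemma variance_fun_sum_const_mul [IsFiniteMeasure μ] {X : ι → Ω → ℝ}
    (hX : ∀ i, MemLp (X i) 2 μ) (a : ι → ℝ) :
    Var[fun ω ↦ ∑ i, a i * X i ω; μ] = ∑ i, ∑ j, a i * a j * cov[X i, X j; μ] := by
  rw [variance_fun_sum fun i ↦ (hX i).const_mul (a i)]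
  refine sum_congr rfl fun i _ ↦ sum_congr rfl fun j _ ↦ ?_
  rw [covariance_const_mul_left, covariance_const_mul_right]
  ring

lemma integral_sum_sum_mul_const {Y : ι → ι → Ω → ℝ} (hY : ∀ i j, Integrable (Y i j) μ)
    (C : ι → ι → ℝ) :
    ∫ ω, ∑ i, ∑ j, Y i j ω * C i j ∂μ = ∑ i, ∑ j, (∫ ω, Y i j ω ∂μ) * C i j := by
  rw [integral_finsetSum _ fun i _ ↦ integrable_finsetSum _ fun j _ ↦ (hY i j).mul_const _]
  refine sum_congr rfl fun i _ ↦ ?_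
  rw [integral_finsetSum _ fun j _ ↦ (hY i j).mul_const _]
  exact sum_congr rfl fun j _ ↦ integral_mul_const _ _

lemma sum_sum_covariance_mul_nonneg [IsFiniteMeasure μ] {X : ι → Ω → ℝ}
    (hX : ∀ i, MemLp (X i) 2 μ) {C : ι → ι → ℝ}
    (hC : ∀ a : ι → ℝ, 0 ≤ ∑ i, ∑ j, a i * a j * C i j) :
    0 ≤ ∑ i, ∑ j, cov[X i, X j; μ] * C i j := by
  have hcent : ∀ i, MemLp (fun ω ↦ X i ω - μ[X i]) 2 μ := fun i ↦ (hX i).sub (memLp_const _)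
  unfold covariance
  rw [← integral_sum_sum_mul_const (Y := fun i j ω ↦ (X i ω - μ[X i]) * (X j ω - μ[X j]))
    fun i j ↦ (hcent i).integrable_mul (hcent j)]
  refine integral_nonneg fun ω ↦ ?_
  exact hC (fun i ↦ X i ω - μ[X i])

lemma sum_sum_integral_mul_le_integral [IsProbabilityMeasure μ] {X : ι → Ω → ℝ}
    (hX : ∀ i, MemLp (X i) 2 μ) {C : ι → ι → ℝ}
    (hC : ∀ a : ι → ℝ, 0 ≤ ∑ i, ∑ j, a i * a j * C i j) :
    ∑ i, ∑ j, μ[X i] * μ[X j] * C i j ≤ ∫ ω, ∑ i, ∑ j, X i ω * X j ω * C i j ∂μ := by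
  have hsecond : ∀ i j, ∫ ω, X i ω * X j ω ∂μ = cov[X i, X j; μ] + μ[X i] * μ[X j] :=
    fun i j ↦ by rw [covariance_eq_sub (hX i) (hX j), sub_add_cancel, Pi.mul_def]
  rw [integral_sum_sum_mul_const (Y := fun i j ω ↦ X i ω * X j ω)
    fun i j ↦ (hX i).integrable_mul (hX j), ← sub_nonneg]
  calc 0 ≤ ∑ i, ∑ j, cov[X i, X j; μ] * C i j := sum_sum_covariance_mul_nonneg hX hC
    _ = _ := by
      rw [← sum_sub_distrib]
      refine sum_congr rfl fun i _ ↦ ?_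
      rw [← sum_sub_distrib]
      refine sum_congr rfl fun j _ ↦ ?_
      rw [hsecond]
      ring

end ProbabilityTheory

theorem stmt_11_general {Ω : Type*} {mΩ : MeasurableSpace Ω} {μ : Measure Ω} [IsProbabilityMeasure μ]
    {k : ℕ} (G H : Ω → Fin k → ℝ) (hGmeas : Measurable G)
    (hG2 : ∀ i, MemLp (fun ω => G ω i) 2 μ) (hH2 : ∀ i, MemLp (fun ω => H ω i) 2 μ) :
    variance (fun ω => ∑ i, (∫ ω', G ω' i ∂μ) * H ω i) μ
      ≤ ∫ g, variance (fun ω => ∑ i, g i * H ω i) μ ∂(Measure.map G μ) := by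
  have hvar := variance_fun_sum_const_mul (X := fun i ω ↦ H ω i) hH2
  have hC : ∀ a : Fin k → ℝ, 0 ≤ ∑ i, ∑ j, a i * a j * cov[fun ω ↦ H ω i, fun ω ↦ H ω j; μ] :=
    fun a ↦ hvar a ▸ variance_nonneg _ _
  simp only [hvar]
  rw [integral_map hGmeas.aemeasurable (by fun_prop)]
  exact sum_sum_integral_mul_le_integral hG2 hC

/-- Conservativeness inequality: for independent square-integrable random vectors `G`
and `H`, the average over the law of `G` of the variance of `⟨g, H⟩` is at least the
variance of `⟨E[G], H⟩`. -/
theorem stmt_11 {Ω : Type*} {mΩ : MeasurableSpace Ω} {μ : Measure Ω} [IsProbabilityMeasure μ]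
    {k : ℕ} (G H : Ω → Fin k → ℝ) (hGmeas : Measurable G) (hHmeas : Measurable H)
    (hG2 : ∀ i, MemLp (fun ω => G ω i) 2 μ) (hH2 : ∀ i, MemLp (fun ω => H ω i) 2 μ)
    (hindep : IndepFun G H μ) :
    variance (fun ω => ∑ i, (∫ ω', G ω' i ∂μ) * H ω i) μ
      ≤ ∫ g, variance (fun ω => ∑ i, g i * H ω i) μ ∂(Measure.map G μ) :=
  stmt_11_general (mΩ := mΩ) G H hGmeas hG2 hH2
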